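/- Let a, b ≥ 1 be integers and N = 2^a·3^b. The partition {A_0, …, A_{N−1}} of F is generating for multiplication by N on G/Γ in the following sense: if x, y ∈ F are such that for every j ∈ ℤ and every 0 ≤ k < N one has rep(N^j·x) ∈ A_k if and only if rep(N^j·y) ∈ A_k, then x = y. -/

import Mathlib

/-!
In the coordinates of `F`, multiplication by `N` is `(r, s, t) ↦ (N r - d, N s - d, N t - d)` with
digit `d = ⌊N r⌋`, because `ℤ[1/6] ∩ ℤ₂ ∩ ℤ₃ = ℤ`. If `x` and `y` have the same digits along their
whole orbit, the differences `δ_j` of their `j`-th iterates therefore satisfy `δ_{j+1} = N δ_j`,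
so `δ_j = N^j (x - y)` for every `j ∈ ℤ`. Each `δ_j` lies in `F - F` and is bounded. Forward
iterates then kill the real coordinate of `x - y`; backward iterates multiply the `p`-adic
coordinates by `N⁻¹`, of norm `> 1` for `p = 2, 3`, and kill those.
-/

open Set

noncomputable section

/-- The ambient group `G = ℝ × ℚ₂ × ℚ₃`. -/
abbrev G : Type := ℝ × ℚ_[2] × ℚ_[3]

/-- The diagonal embedding of `ℚ` into `G`. -/
def Δ (r : ℚ) : G := ((r : ℝ), (r : ℚ_[2]), (r : ℚ_[3]))

/-- `ℤ[1/6]`, the rationals expressible with denominator `6^k`. -/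
def zInv6 : Set ℚ := {q | ∃ (z : ℤ) (k : ℕ), q = z / 6 ^ k}

/-- `Γ = Δ(ℤ[1/6])`. -/
def Γ : Set G := Δ '' zInv6

/-- The fundamental domain `F = [0,1) × ℤ₂ × ℤ₃`. -/
def F : Set G := {x | x.1 ∈ Set.Ico (0 : ℝ) 1 ∧ ‖x.2.1‖ ≤ 1 ∧ ‖x.2.2‖ ≤ 1}

/-- Coordinatewise multiplication by a rational on `G`. -/
def act (q : ℚ) (x : G) : G :=
  ((q : ℝ) * x.1, (q : ℚ_[2]) * x.2.1, (q : ℚ_[3]) * x.2.2)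

/-- The atom `A_k = [k/N, (k+1)/N) × ℤ₂ × ℤ₃` of the partition `ξ`. -/
def A (N k : ℕ) : Set G :=
  {x | x.1 ∈ Set.Ico ((k : ℝ) / N) (((k : ℝ) + 1) / N) ∧ ‖x.2.1‖ ≤ 1 ∧ ‖x.2.2‖ ≤ 1}

lemma act_eq_smul (q : ℚ) (x : G) : act q x = q • x := by
  ext <;> simp [act, Rat.smul_def]

lemma Δ_eq_smul_one (r : ℚ) : Δ r = r • (1 : G) := by
  ext <;> simp [Δ, Rat.smul_def]

lemma sub_mem_zInv6 {q r : ℚ} (hq : q ∈ zInv6) (hr : r ∈ zInv6) : q - r ∈ zInv6 := by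
  obtain ⟨z, k, rfl⟩ := hq
  obtain ⟨z', k', rfl⟩ := hr
  exact ⟨z * 6 ^ k' - z' * 6 ^ k, k + k', by push_cast; field_simp; ring⟩

lemma natCast_mul_mem_zInv6 (N : ℕ) {q : ℚ} (hq : q ∈ zInv6) : N * q ∈ zInv6 := by
  obtain ⟨z, k, rfl⟩ := hq
  exact ⟨N * z, k, by push_cast; ring⟩

lemma exists_intCast_eq_of_mem_zInv6 {q : ℚ} (hq : q ∈ zInv6) (h2 : ‖(q : ℚ_[2])‖ ≤ 1)
    (h3 : ‖(q : ℚ_[3])‖ ≤ 1) : ∃ n : ℤ, (n : ℚ) = q := by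
  obtain ⟨z, k, rfl⟩ := hq
  have hden : ((z : ℚ) / 6 ^ k).den ∣ 6 ^ k := by
    have := Rat.den_dvd z (6 ^ k)
    rw [Rat.divInt_eq_div] at this
    exact_mod_cast this
  have hcop (p : ℕ) [Fact p.Prime] (hp : ‖(((z : ℚ) / 6 ^ k : ℚ) : ℚ_[p])‖ ≤ 1) :
      Nat.Coprime ((z : ℚ) / 6 ^ k).den p :=
    (PadicInt.norm_natCast_eq_one_iff.1 (PadicInt.isUnit_iff.1 (PadicInt.isUnit_den _ hp))).symm
  have h6 : Nat.Coprime ((z : ℚ) / 6 ^ k).den (6 ^ k) :=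
    Nat.Coprime.pow_right k (Nat.Coprime.mul_right (hcop 2 h2) (hcop 3 h3))
  exact ⟨_, Rat.coe_int_num_of_den_eq_one (h6.eq_one_of_dvd hden)⟩

def integralSubring : Subring G :=
  (⊤ : Subring ℝ).prod ((PadicInt.subring 2).prod (PadicInt.subring 3))

lemma mem_integralSubring {u : G} :
    u ∈ integralSubring ↔ ‖u.2.1‖ ≤ 1 ∧ ‖u.2.2‖ ≤ 1 := by
  simp [integralSubring, Subring.mem_prod, PadicInt.mem_subring_iff]

lemma F_subset_integralSubring : F ⊆ integralSubring :=
  fun _ hu ↦ mem_integralSubring.2 hu.2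

lemma exists_int_eq_Δ_of_mem_Γ {g : G} (hΓ : g ∈ Γ) (hg : g ∈ integralSubring) :
    ∃ n : ℤ, g = Δ n := by
  obtain ⟨q, hq, rfl⟩ := hΓ
  obtain ⟨h2, h3⟩ := mem_integralSubring.1 hg
  obtain ⟨n, rfl⟩ := exists_intCast_eq_of_mem_zInv6 hq h2 h3
  exact ⟨n, rfl⟩

lemma rep_eq_self {rep : G → G} (hrep : ∀ x : G, rep x ∈ F ∧ x - rep x ∈ Γ) {x : G}
    (hx : x ∈ F) : rep x = x := by
  obtain ⟨n, hn⟩ := exists_int_eq_Δ_of_mem_Γ (hrep x).2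
    (sub_mem (F_subset_integralSubring hx) (F_subset_integralSubring (hrep x).1))
  have hn1 : x.1 - (rep x).1 = n := congrArg Prod.fst hn
  have hlt : |(n : ℝ)| < 1 := by
    rw [← hn1, abs_sub_lt_iff]
    constructor <;> linarith [hx.1.1, hx.1.2, (hrep x).1.1.1, (hrep x).1.1.2]
  have : n = 0 := Int.abs_lt_one_iff.1 (by exact_mod_cast hlt)
  rw [this, Int.cast_zero, Δ_eq_smul_one, zero_smul, sub_eq_zero] at hn
  exact hn.symm

lemma rep_natCast_smul {rep : G → G} (hrep : ∀ x : G, rep x ∈ F ∧ x - rep x ∈ Γ) (N : ℕ)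
    (u : G) :
    rep ((N : ℚ) • u) = (N : ℚ) • rep u - Δ ⌊(N : ℝ) * (rep u).1⌋ := by
  obtain ⟨q₁, hq₁, hu⟩ := (hrep u).2
  obtain ⟨q₂, hq₂, hNu⟩ := (hrep ((N : ℚ) • u)).2
  have hΓ : (N : ℚ) • rep u - rep ((N : ℚ) • u) ∈ Γ := by
    refine ⟨q₂ - N * q₁, sub_mem_zInv6 hq₂ (natCast_mul_mem_zInv6 N hq₁), ?_⟩
    rw [Δ_eq_smul_one] at hu hNu ⊢
    rw [sub_smul, mul_smul, hu, hNu, smul_sub]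
    abel
  have hint : (N : ℚ) • rep u - rep ((N : ℚ) • u) ∈ integralSubring := by
    rw [Nat.cast_smul_eq_nsmul]
    exact sub_mem (nsmul_mem (F_subset_integralSubring (hrep u).1) N)
      (F_subset_integralSubring (hrep _).1)
  obtain ⟨n, hn⟩ := exists_int_eq_Δ_of_mem_Γ hΓ hint
  have hfloor : ⌊(N : ℝ) * (rep u).1⌋ = n := by
    have hn1 : (N : ℝ) * (rep u).1 - (rep ((N : ℚ) • u)).1 = n := by
      simpa [Δ, Rat.smul_def] using congrArg Prod.fst hn
    rw [Int.floor_eq_iff]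
    constructor <;> linarith [(hrep ((N : ℚ) • u)).1.1.1, (hrep ((N : ℚ) • u)).1.1.2]
  rw [hfloor, ← hn]
  abel

lemma norm_sub_le_one_of_mem_F {u v : G} (hu : u ∈ F) (hv : v ∈ F) : ‖u - v‖ ≤ 1 := by
  have hp {p : ℕ} [Fact p.Prime] {a b : ℚ_[p]} (ha : ‖a‖ ≤ 1) (hb : ‖b‖ ≤ 1) : ‖a - b‖ ≤ 1 := by
    rw [sub_eq_add_neg]
    exact (IsUltrametricDist.norm_add_le_max a (-b)).trans (max_le ha (by rwa [norm_neg]))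
  refine norm_prod_le_iff.2 ⟨?_, norm_prod_le_iff.2 ⟨hp hu.2.1 hv.2.1, hp hu.2.2 hv.2.2⟩⟩
  rw [Prod.fst_sub, Real.norm_eq_abs, abs_sub_le_iff]
  constructor <;> linarith [hu.1.1, hu.1.2, hv.1.1, hv.1.2]

lemma mem_A_iff_floor_eq {N : ℕ} (hN : 0 < N) (k : ℕ) {u : G} (hu : u ∈ F) :
    u ∈ A N k ↔ ⌊(N : ℝ) * u.1⌋ = k := by
  have hNR : (0 : ℝ) < N := by exact_mod_cast hN
  simp only [A, Set.mem_ofPred_eq, hu.2, and_true, Set.mem_Ico, Int.floor_eq_iff,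
    div_le_iff₀ hNR, lt_div_iff₀ hNR, Int.cast_natCast]
  constructor <;> rintro ⟨h₁, h₂⟩ <;> constructor <;> linarith

lemma floor_mul_fst_eq_of_forall_mem_A_iff {N : ℕ} (hN : 0 < N) {u v : G} (hu : u ∈ F)
    (hv : v ∈ F) (h : ∀ k < N, u ∈ A N k ↔ v ∈ A N k) :
    ⌊(N : ℝ) * u.1⌋ = ⌊(N : ℝ) * v.1⌋ := by
  have hNR : (0 : ℝ) < N := by exact_mod_cast hN
  set k := ⌊(N : ℝ) * u.1⌋.toNat
  have hk : ⌊(N : ℝ) * u.1⌋ = k :=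
    (Int.toNat_of_nonneg (Int.floor_nonneg.2 (mul_nonneg hNR.le hu.1.1))).symm
  have hkN : k < N := by
    have : ⌊(N : ℝ) * u.1⌋ < N := Int.floor_lt.2 (by simpa using mul_lt_of_lt_one_right hNR hu.1.2)
    omega
  have hv' := (h k hkN).1 ((mem_A_iff_floor_eq hN k hu).2 hk)
  rw [hk, (mem_A_iff_floor_eq hN k hv).1 hv']

lemma zpow_smul_of_forall_succ {K V : Type*} [DivisionRing K] [AddCommGroup V] [Module K V]
    {c : K} (hc : c ≠ 0) {δ : ℤ → V} (h : ∀ j, δ (j + 1) = c • δ j) (j : ℤ) :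
    δ j = c ^ j • δ 0 := by
  induction j using Int.induction_on with
  | zero => simp
  | succ i ih => rw [h, ih, smul_smul, ← zpow_one_add₀ hc, add_comm]
  | pred i ih =>
    rw [← inv_smul_smul₀ hc (δ _), ← h, sub_add_cancel, ih, smul_smul, ← zpow_neg_one,
      ← zpow_add₀ hc, neg_add_eq_sub]

lemma eq_zero_of_forall_norm_pow_mul_le_one {K : Type*} [NormedDivisionRing K] {c z : K}
    (hc : 1 < ‖c‖) (h : ∀ m : ℕ, ‖c ^ m * z‖ ≤ 1) : z = 0 := by
  by_contra hz
  obtain ⟨m, hm⟩ := pow_unbounded_of_one_lt ‖z‖⁻¹ hc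
  have := h m
  rw [norm_mul, norm_pow] at this
  have hz' : 0 < ‖z‖ := norm_pos_iff.2 hz
  rw [inv_lt_iff_one_lt_mul₀ hz'] at hm
  linarith

lemma eq_zero_of_forall_norm_zpow_smul_le_one {N : ℕ} (hN : N ≠ 0) (h2 : 2 ∣ N) (h3 : 3 ∣ N)
    {z : G} (h : ∀ j : ℤ, ‖(N : ℚ) ^ j • z‖ ≤ 1) : z = 0 := by
  have hpadic {p : ℕ} [Fact p.Prime] (hp : p ∣ N) {w : ℚ_[p]}
      (hw : ∀ m : ℕ, ‖((N : ℚ_[p])⁻¹) ^ m * w‖ ≤ 1) : w = 0 := by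
    refine eq_zero_of_forall_norm_pow_mul_le_one ?_ hw
    rw [norm_inv]
    exact one_lt_inv_iff₀.2 ⟨norm_pos_iff.2 (by exact_mod_cast hN),
      Padic.norm_natCast_lt_one_iff.2 hp⟩
  refine Prod.ext ?_ (Prod.ext ?_ ?_)
  · refine eq_zero_of_forall_norm_pow_mul_le_one (c := (N : ℝ)) ?_ fun m ↦ ?_
    · have : 2 ≤ N := Nat.le_of_dvd (Nat.pos_of_ne_zero hN) h2
      rw [Real.norm_natCast]; exact_mod_cast this
    · simpa [Rat.smul_def] using (norm_fst_le _).trans (h m)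
  · refine hpadic h2 fun m ↦ ?_
    simpa [Rat.smul_def] using ((norm_fst_le _).trans (norm_snd_le _)).trans (h (-m))
  · refine hpadic h3 fun m ↦ ?_
    simpa [Rat.smul_def] using ((norm_snd_le _).trans (norm_snd_le _)).trans (h (-m))

/-- The partition `{A_0, …, A_{N-1}}` is generating for multiplication by `N = 2^a 3^b`
on `G/Γ`: two points of `F` with the same itinerary under all forward and backward
iterates coincide. -/
theorem partition_generating (rep : G → G) (hrep : ∀ x : G, rep x ∈ F ∧ x - rep x ∈ Γ)
    (a b : ℕ) (ha : 1 ≤ a) (hb : 1 ≤ b) (N : ℕ) (hN : N = 2 ^ a * 3 ^ b)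
    (x y : G) (hx : x ∈ F) (hy : y ∈ F)
    (h : ∀ (j : ℤ) (k : ℕ), k < N →
      (rep (act ((N : ℚ) ^ j) x) ∈ A N k ↔ rep (act ((N : ℚ) ^ j) y) ∈ A N k)) :
    x = y := by
  have hN0 : 0 < N := by rw [hN]; positivity
  have hNq : (N : ℚ) ≠ 0 := by exact_mod_cast hN0.ne'
  simp only [act_eq_smul] at h
  set δ : ℤ → G := fun j ↦ rep ((N : ℚ) ^ j • x) - rep ((N : ℚ) ^ j • y) with hδ
  have hstep (j : ℤ) : δ (j + 1) = (N : ℚ) • δ j := by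
    have hdigit := floor_mul_fst_eq_of_forall_mem_A_iff hN0 (hrep _).1 (hrep _).1 (h j)
    simp only [hδ, zpow_add_one₀ hNq, mul_comm _ (N : ℚ), mul_smul, rep_natCast_smul hrep,
      hdigit, smul_sub]
    abel
  have hδ0 : δ 0 = x - y := by simp [hδ, rep_eq_self hrep hx, rep_eq_self hrep hy]
  have h2 : 2 ∣ N := hN ▸ dvd_mul_of_dvd_left (dvd_pow_self 2 (by omega)) _
  have h3 : 3 ∣ N := hN ▸ dvd_mul_of_dvd_right (dvd_pow_self 3 (by omega)) _
  refine sub_eq_zero.1 (eq_zero_of_forall_norm_zpow_smul_le_one hN0.ne' h2 h3 fun j ↦ ?_)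
  rw [← hδ0, ← zpow_smul_of_forall_succ hNq hstep j]
  exact norm_sub_le_one_of_mem_F (hrep _).1 (hrep _).1
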